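/- arXiv:1208.5216 — 6 statements merged into one kernel-verified Lean document; each statement's English description precedes it below -/
import Mathlib

section
/- If v and v' are coprime positive integers, there exists a perfect regular difference system of sets DSS(v,m,q,ρ) over Z_v whose blocks form a difference family DF(v,m,λ), and a perfect regular DSS(v',m',q',ρ') over Z_{v'} whose blocks form a DF(v',m',λ'), then the family of all direct products Q_i × Q'_j (viewed as subsets of Z_{vv'} via the Chinese remainder isomorphism) is a regular DSS(vv', mm', qq', min(ρρ'+ρλ'+ρ'λ, ρm'q', ρ'mq)). -/
/-- Number of occurrences of `d` as an outer difference (difference of elements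
from distinct member sets) in the family `Q`. -/
def outerCount {G ι : Type*} [AddCommGroup G] [DecidableEq G] [Fintype ι] [DecidableEq ι]
    (Q : ι → Finset G) (d : G) : ℕ :=
  ∑ i : ι, ∑ j : ι, if i = j then 0 else ((Q i ×ˢ Q j).filter (fun p => p.1 - p.2 = d)).card

/-- Number of occurrences of `d` as an inner difference (difference of two distinct
elements of a single member set) in the family `Q`. -/
def innerCount {G ι : Type*} [AddCommGroup G] [DecidableEq G] [Fintype ι]
    (Q : ι → Finset G) (d : G) : ℕ :=
  ∑ i : ι, ((Q i ×ˢ Q i).filter (fun p => p.1 - p.2 = d ∧ p.1 ≠ p.2)).card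

/-!
Count the pairs of points with difference `d` over all ordered pairs of blocks, diagonal pairs
`(Q i, Q i)` included. This total count and its diagonal part are both multiplicative for a
product family, so at `d ↦ (x, x')` the outer count of the product family is
`(o x + δ x) (o' x' + δ' x') - δ x δ' x'`, where `o` and `δ` are the outer and diagonal counts of
the factors. At a nonzero coordinate these are `ρ` and `λ`; at a zero coordinate they are `0`
(the blocks are disjoint) and `qm`. The three possible patterns of zero coordinates give the
three terms of the minimum, each attained exactly.
-/

open Finset Function

section DiffCount

variable {G H ι κ : Type*} [AddCommGroup G] [AddCommGroup H] [DecidableEq G] [DecidableEq H]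

def diffCount (s t : Finset G) (d : G) : ℕ :=
  #{p ∈ s ×ˢ t | p.1 - p.2 = d}

theorem diffCount_product (s t : Finset G) (s' t' : Finset H) (d : G) (d' : H) :
    diffCount (s ×ˢ s') (t ×ˢ t') (d, d') = diffCount s t d * diffCount s' t' d' := by
  rw [diffCount, diffCount, diffCount, ← card_product]
  refine card_equiv (Equiv.prodProdProdComm G H G H) fun _ => ?_
  simp only [mem_filter, mem_product, Equiv.prodProdProdComm_apply, Prod.ext_iff, Prod.fst_sub,
    Prod.snd_sub]
  tauto

theorem diffCount_image {F : Type*} [FunLike F G H] [AddMonoidHomClass F G H] (f : F)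
    (hf : Injective f) (s t : Finset G) (d : G) :
    diffCount (s.image f) (t.image f) (f d) = diffCount s t d := by
  rw [diffCount, diffCount, ← prodMap_image_product, filter_image,
    card_image_of_injective _ (hf.prodMap hf)]
  simp only [Prod.map_fst, Prod.map_snd, ← map_sub, hf.eq_iff]

theorem diffCount_self_zero (s : Finset G) : diffCount s s 0 = #s := by
  simp only [diffCount, sub_eq_zero, ← diag_eq_filter, diag_card]

theorem diffCount_zero_of_disjoint {s t : Finset G} (h : Disjoint s t) : diffCount s t 0 = 0 := by
  rw [diffCount, card_eq_zero, filter_eq_empty_iff]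
  rintro ⟨a, b⟩ hab hzero
  rw [mem_product, sub_eq_zero.mp hzero] at hab
  exact disjoint_left.mp h hab.1 hab.2

section Family

variable [Fintype ι] [Fintype κ]

def diagCount (Q : ι → Finset G) (d : G) : ℕ :=
  ∑ i, diffCount (Q i) (Q i) d

theorem diagCount_eq_innerCount (Q : ι → Finset G) {d : G} (hd : d ≠ 0) :
    diagCount Q d = innerCount Q d :=
  sum_congr rfl fun i _ => congrArg card <| filter_congr fun p _ =>
    ⟨fun h => ⟨h, fun hp => hd (by rw [← h, hp, sub_self])⟩, And.left⟩

theorem diagCount_zero {Q : ι → Finset G} {m : ℕ} (h : ∀ i, #(Q i) = m) :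
    diagCount Q 0 = Fintype.card ι * m := by
  simp only [diagCount, diffCount_self_zero, h, sum_const, card_univ, smul_eq_mul]

theorem diagCount_product (Q : ι → Finset G) (Q' : κ → Finset H) (d : G) (d' : H) :
    diagCount (fun a : ι × κ => Q a.1 ×ˢ Q' a.2) (d, d') = diagCount Q d * diagCount Q' d' := by
  simp only [diagCount, diffCount_product, Fintype.sum_prod_type, sum_mul_sum]

variable [DecidableEq ι] [DecidableEq κ]

theorem outerCount_eq_sum_diffCount (Q : ι → Finset G) (d : G) :
    outerCount Q d = ∑ i, ∑ j, if i = j then 0 else diffCount (Q i) (Q j) d :=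
  rfl

theorem outerCount_zero {Q : ι → Finset G} (h : Pairwise (Disjoint on Q)) : outerCount Q 0 = 0 :=
  sum_eq_zero fun i _ => sum_eq_zero fun j _ => by
    split_ifs with hij
    · rfl
    · exact diffCount_zero_of_disjoint (h hij)

theorem outerCount_image {F : Type*} [FunLike F G H] [AddMonoidHomClass F G H] (f : F)
    (hf : Injective f) (Q : ι → Finset G) (d : G) :
    outerCount (fun i => (Q i).image f) (f d) = outerCount Q d := by
  simp only [outerCount_eq_sum_diffCount, diffCount_image f hf]

theorem outerCount_add_diagCount (Q : ι → Finset G) (d : G) :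
    outerCount Q d + diagCount Q d = ∑ i, ∑ j, diffCount (Q i) (Q j) d := by
  rw [outerCount_eq_sum_diffCount, diagCount, ← sum_add_distrib]
  refine sum_congr rfl fun i _ => ?_
  rw [← Fintype.sum_ite_eq i fun j => diffCount (Q i) (Q j) d, ← sum_add_distrib]
  exact sum_congr rfl fun j _ => by split_ifs <;> simp_all

theorem outerCount_product_add_diagCount_mul (Q : ι → Finset G) (Q' : κ → Finset H) (d : G)
    (d' : H) :
    outerCount (fun a : ι × κ => Q a.1 ×ˢ Q' a.2) (d, d') + diagCount Q d * diagCount Q' d' =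
      (outerCount Q d + diagCount Q d) * (outerCount Q' d' + diagCount Q' d') := by
  rw [← diagCount_product, outerCount_add_diagCount, outerCount_add_diagCount,
    outerCount_add_diagCount, sum_mul_sum]
  simp only [Fintype.sum_prod_type, diffCount_product, sum_mul_sum]

end Family

end DiffCount

theorem stmt_0_general (v v' m m' q q' ρ ρ' lam lam' : ℕ) (hco : Nat.Coprime v v')
    (Q : Fin q → Finset (ZMod v)) (Q' : Fin q' → Finset (ZMod v'))
    (hQdisj : ∀ i j, i ≠ j → Disjoint (Q i) (Q j))
    (hQcard : ∀ i, (Q i).card = m)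
    (hQperf : ∀ d : ZMod v, d ≠ 0 → outerCount Q d = ρ)
    (hQdf : ∀ d : ZMod v, d ≠ 0 → innerCount Q d = lam)
    (hQ'disj : ∀ i j, i ≠ j → Disjoint (Q' i) (Q' j))
    (hQ'card : ∀ i, (Q' i).card = m')
    (hQ'perf : ∀ d : ZMod v', d ≠ 0 → outerCount Q' d = ρ')
    (hQ'df : ∀ d : ZMod v', d ≠ 0 → innerCount Q' d = lam') :
    let R : Fin q × Fin q' → Finset (ZMod (v * v')) := fun ij =>
      (Q ij.1 ×ˢ Q' ij.2).image (fun p => (ZMod.chineseRemainder hco).symm p)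
    (∀ a b, a ≠ b → Disjoint (R a) (R b)) ∧
    (∀ a, (R a).card = m * m') ∧
    (∀ d : ZMod (v * v'), d ≠ 0 →
      min (ρ * ρ' + ρ * lam' + ρ' * lam) (min (ρ * m' * q') (ρ' * m * q)) ≤ outerCount R d) := by
  intro R
  set c := ZMod.chineseRemainder hco
  refine ⟨fun a b hab => ?_, fun a => ?_, fun d hd => ?_⟩
  · rw [disjoint_image c.symm.injective, disjoint_product]
    by_cases h : a.1 = b.1
    · exact Or.inr (hQ'disj _ _ fun h' => hab (Prod.ext h h'))
    · exact Or.inl (hQdisj _ _ h)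
  · rw [card_image_of_injective _ c.symm.injective, card_product, hQcard, hQ'card]
  have hR : outerCount R d = outerCount (fun a : Fin q × Fin q' => Q a.1 ×ˢ Q' a.2) (c d) := by
    have := outerCount_image c.symm c.symm.injective
      (fun a : Fin q × Fin q' => Q a.1 ×ˢ Q' a.2) (c d)
    rwa [RingEquiv.symm_apply_apply] at this
  have hcount := outerCount_product_add_diagCount_mul Q Q' (c d).1 (c d).2
  rw [← hR] at hcount
  rcases eq_or_ne (c d).1 0 with h1 | h1 <;> rcases eq_or_ne (c d).2 0 with h2 | h2
  · exact absurd (c.injective (by rw [map_zero]; exact Prod.ext h1 h2)) hd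
  · rw [h1, outerCount_zero (fun i j => hQdisj i j), diagCount_zero hQcard,
      diagCount_eq_innerCount _ h2, hQ'perf _ h2, hQ'df _ h2, Fintype.card_fin] at hcount
    have : outerCount R d = ρ' * m * q := by linarith
    omega
  · rw [h2, outerCount_zero (fun i j => hQ'disj i j), diagCount_zero hQ'card,
      diagCount_eq_innerCount _ h1, hQperf _ h1, hQdf _ h1, Fintype.card_fin] at hcount
    have : outerCount R d = ρ * m' * q' := by linarith
    omega
  · rw [diagCount_eq_innerCount _ h1, hQperf _ h1, hQdf _ h1, diagCount_eq_innerCount _ h2,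
      hQ'perf _ h2, hQ'df _ h2] at hcount
    have : outerCount R d = ρ * ρ' + ρ * lam' + ρ' * lam := by linarith
    omega

theorem stmt_0 (v v' m m' q q' ρ ρ' lam lam' : ℕ) (hv : 0 < v) (hv' : 0 < v')
    (hco : Nat.Coprime v v')
    (Q : Fin q → Finset (ZMod v)) (Q' : Fin q' → Finset (ZMod v'))
    (hQdisj : ∀ i j, i ≠ j → Disjoint (Q i) (Q j))
    (hQcard : ∀ i, (Q i).card = m)
    (hQperf : ∀ d : ZMod v, d ≠ 0 → outerCount Q d = ρ)
    (hQdf : ∀ d : ZMod v, d ≠ 0 → innerCount Q d = lam)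
    (hQ'disj : ∀ i j, i ≠ j → Disjoint (Q' i) (Q' j))
    (hQ'card : ∀ i, (Q' i).card = m')
    (hQ'perf : ∀ d : ZMod v', d ≠ 0 → outerCount Q' d = ρ')
    (hQ'df : ∀ d : ZMod v', d ≠ 0 → innerCount Q' d = lam') :
    let R : Fin q × Fin q' → Finset (ZMod (v * v')) := fun ij =>
      (Q ij.1 ×ˢ Q' ij.2).image (fun p => (ZMod.chineseRemainder hco).symm p)
    (∀ a b, a ≠ b → Disjoint (R a) (R b)) ∧
    (∀ a, (R a).card = m * m') ∧
    (∀ d : ZMod (v * v'), d ≠ 0 →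
      min (ρ * ρ' + ρ * lam' + ρ' * lam) (min (ρ * m' * q') (ρ' * m * q)) ≤ outerCount R d) :=
  stmt_0_general v v' m m' q q' ρ ρ' lam lam' hco Q Q' hQdisj hQcard hQperf hQdf hQ'disj hQ'card
    hQ'perf hQ'df
end

section
/- (Levenshtein bound) If Q_0,...,Q_{q-1} is a DSS of index ρ over Z_v with q ≥ 2, and r denotes the total number of elements used, r = |Q_0 ∪ ... ∪ Q_{q-1}|, then r ≥ sqrt(qρ(v−1)/(q−1)); equivalently r²(q−1) ≥ qρ(v−1). -/
/-
Summed over all d, the outer-difference counts count each ordered pair from distinct blocks once,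
so the total is r² - Σ|Q_i|², while the terms with d ≠ 0 alone give at least (v - 1)ρ.
Cauchy–Schwarz, Σ|Q_i|² ≥ r²/q, then yields (v - 1)ρ ≤ r²(q - 1)/q.
-/

open Finset

section DifferenceCounts

variable {G ι : Type*} [AddCommGroup G] [Fintype G] [DecidableEq G] [Fintype ι] [DecidableEq ι]

theorem sum_outerCount (Q : ι → Finset G) :
    ∑ d, outerCount Q d = ∑ i, ∑ j, if i = j then 0 else #(Q i) * #(Q j) := by
  unfold outerCount
  rw [sum_comm]
  refine sum_congr rfl fun i _ => ?_
  rw [sum_comm]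
  refine sum_congr rfl fun j _ => ?_
  split_ifs
  · simp
  · rw [← card_product, card_eq_sum_card_fiberwise (f := fun p : G × G => p.1 - p.2)
      (fun _ _ => mem_univ _)]

theorem sum_outerCount_add_sum_card_sq (Q : ι → Finset G) :
    ∑ d, outerCount Q d + ∑ i, #(Q i) ^ 2 = (∑ i, #(Q i)) ^ 2 := by
  rw [sum_outerCount, sq, sum_mul_sum, ← sum_add_distrib]
  refine sum_congr rfl fun i _ => ?_
  have hdiag : ∑ j, (if i = j then #(Q i) * #(Q j) else 0) = #(Q i) * #(Q i) := by simp
  rw [sq, ← hdiag, ← sum_add_distrib]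
  exact sum_congr rfl fun j _ => by split_ifs <;> simp

theorem card_sub_one_mul_le_sum_outerCount {Q : ι → Finset G} {ρ : ℕ}
    (hidx : ∀ d : G, d ≠ 0 → ρ ≤ outerCount Q d) :
    (Fintype.card G - 1) * ρ ≤ ∑ d, outerCount Q d :=
  calc (Fintype.card G - 1) * ρ = ∑ _d ∈ univ.erase (0 : G), ρ := by
        rw [sum_const, card_erase_of_mem (mem_univ _), card_univ, smul_eq_mul]
    _ ≤ ∑ d ∈ univ.erase (0 : G), outerCount Q d :=
        sum_le_sum fun d hd => hidx d (ne_of_mem_erase hd)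
    _ ≤ ∑ d, outerCount Q d := sum_le_sum_of_subset (erase_subset _ _)

theorem levenshtein_bound {Q : ι → Finset G} {ρ : ℕ}
    (hidx : ∀ d : G, d ≠ 0 → ρ ≤ outerCount Q d) :
    Fintype.card ι * ρ * (Fintype.card G - 1) ≤ (∑ i, #(Q i)) ^ 2 * (Fintype.card ι - 1) := by
  set s := ∑ i, #(Q i)
  have hCS : s ^ 2 ≤ Fintype.card ι * ∑ i, #(Q i) ^ 2 := sq_sum_le_card_mul_sum_sq
  have hcount := card_sub_one_mul_le_sum_outerCount hidx
  have hsplit := sum_outerCount_add_sum_card_sq Q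
  calc Fintype.card ι * ρ * (Fintype.card G - 1)
      = Fintype.card ι * ((Fintype.card G - 1) * ρ) := by ring
    _ ≤ Fintype.card ι * s ^ 2 - s ^ 2 := by
        refine Nat.le_sub_of_add_le ?_
        calc Fintype.card ι * ((Fintype.card G - 1) * ρ) + s ^ 2
            ≤ Fintype.card ι * ∑ d, outerCount Q d + Fintype.card ι * ∑ i, #(Q i) ^ 2 :=
              add_le_add (Nat.mul_le_mul_left _ hcount) hCS
          _ = Fintype.card ι * s ^ 2 := by rw [← mul_add, hsplit]
    _ = s ^ 2 * (Fintype.card ι - 1) := by rw [Nat.mul_sub_one, mul_comm]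

end DifferenceCounts

theorem stmt_6 (v q ρ : ℕ) (hq : 2 ≤ q)
    (Q : Fin q → Finset (ZMod v))
    (hdisj : ∀ i j, i ≠ j → Disjoint (Q i) (Q j))
    (hidx : ∀ d : ZMod v, d ≠ 0 → ρ ≤ outerCount Q d) :
    Real.sqrt ((q * ρ * (v - 1) : ℝ) / (q - 1)) ≤ ((Finset.univ.biUnion Q).card : ℝ) ∧
    q * ρ * (v - 1) ≤ (Finset.univ.biUnion Q).card ^ 2 * (q - 1) := by
  set r := #(univ.biUnion Q)
  have hr : r = ∑ i, #(Q i) := card_biUnion fun i _ j _ h => hdisj i j h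
  have hq1 : (1 : ℝ) < q := by exact_mod_cast hq
  have hnat : q * ρ * (v - 1) ≤ r ^ 2 * (q - 1) := by
    rcases v with _ | v
    · simp
    · simpa [hr] using levenshtein_bound hidx
  have hreal : (q * ρ * (v - 1) : ℝ) ≤ r ^ 2 * (q - 1) := by
    -- for `v = 0` the real `v - 1` is `-1`, not the truncated `0` of `hnat`
    rcases v with _ | v
    · have hrhs : (0 : ℝ) ≤ r ^ 2 * (q - 1) := by have := sub_pos.2 hq1; positivity
      have hlhs : (0 : ℝ) ≤ q * ρ := by positivity
      push_cast
      linarith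
    · have h := (Nat.cast_le (α := ℝ)).2 hnat
      push_cast [Nat.cast_sub (show 1 ≤ q by omega)] at h
      simpa using h
  refine ⟨?_, hnat⟩
  rw [Real.sqrt_le_left (by positivity), div_le_iff₀ (by linarith)]
  exact hreal
end

section
/- Let p = 12n²+1 be an odd prime. Then the three 6th-power cyclotomic classes C_0^6, C_2^6, C_4^6 in F_p (each of size 2n²) form a perfect regular DSS(12n²+1, 2n², 3, 2n²): every nonzero element of F_p occurs exactly 2n² times as an outer difference between distinct classes among these three. -/
open Finset ComplexConjugate

namespace IsPrimitiveRoot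

section Domain

variable {R : Type*} [CommRing R] [IsDomain R] {ζ : R}

theorem sq_eq_sub_one_of_six (hζ : IsPrimitiveRoot ζ 6) : ζ ^ 2 = ζ - 1 := by
  have h := hζ.isRoot_cyclotomic (by norm_num)
  rw [Polynomial.cyclotomic_six, Polynomial.IsRoot.def] at h
  simp only [Polynomial.eval_add, Polynomial.eval_sub, Polynomial.eval_pow, Polynomial.eval_X,
    Polynomial.eval_one] at h
  linear_combination h

theorem pow_three_eq_neg_one_of_six (hζ : IsPrimitiveRoot ζ 6) : ζ ^ 3 = -1 := by
  linear_combination (ζ + 1) * hζ.sq_eq_sub_one_of_six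

theorem exists_eq_add_mul_of_mem_adjoin (hζ : IsPrimitiveRoot ζ 6) {z : R}
    (hz : z ∈ Algebra.adjoin ℤ {ζ}) : ∃ m n : ℤ, z = m + n * ζ := by
  induction hz using Algebra.adjoin_induction with
  | mem x hx => exact ⟨0, 1, by rw [Set.mem_singleton_iff.mp hx]; simp⟩
  | algebraMap k => exact ⟨k, 0, by simp⟩
  | add x y _ _ hx hy =>
    obtain ⟨m, n, rfl⟩ := hx
    obtain ⟨m', n', rfl⟩ := hy
    exact ⟨m + m', n + n', by push_cast; ring⟩
  | mul x y _ _ hx hy =>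
    obtain ⟨m, n, rfl⟩ := hx
    obtain ⟨m', n', rfl⟩ := hy
    exact ⟨m * m' - n * n', m * n' + n * m' + n * n', by
      push_cast; linear_combination (n : R) * n' * hζ.sq_eq_sub_one_of_six⟩

theorem exists_pow_eq_pow_pow_four_add_mul_two (hζ : IsPrimitiveRoot ζ 6) (r : ℕ) :
    ∃ z ∈ Algebra.adjoin ℤ {ζ}, ζ ^ r = (ζ ^ r) ^ 4 + z * 2 := by
  have h4 : (ζ ^ r) ^ 4 = (-1) ^ r * ζ ^ r := by
    rw [← hζ.pow_three_eq_neg_one_of_six, ← pow_mul, ← pow_mul, ← pow_add]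
    ring_nf
  rcases Nat.even_or_odd r with hr | hr
  · exact ⟨0, zero_mem _, by rw [h4, hr.neg_one_pow]; ring⟩
  · exact ⟨ζ ^ r, pow_mem (Algebra.self_mem_adjoin_singleton ℤ ζ) r, by
      rw [h4, hr.neg_one_pow]; ring⟩

theorem exists_pow_eq_pow_pow_three_add_mul (hζ : IsPrimitiveRoot ζ 6) (r : ℕ) :
    ∃ z ∈ Algebra.adjoin ℤ {ζ}, ζ ^ r = (ζ ^ r) ^ 3 + z * (ζ + 1) := by
  have hmem : ζ ∈ Algebra.adjoin ℤ {ζ} := Algebra.self_mem_adjoin_singleton ℤ ζ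
  refine ⟨∑ i ∈ range r, ζ ^ i * (-1) ^ (r - 1 - i),
    sum_mem fun i _ => mul_mem (pow_mem hmem i) (pow_mem (neg_mem (one_mem _)) _), ?_⟩
  -- `ζ ≡ -1` modulo `ζ + 1`, and `(ζ ^ r) ^ 3 = (-1) ^ r` exactly
  rw [← sub_neg_eq_add ζ 1, geom_sum₂_mul, ← pow_mul, mul_comm, pow_mul,
    hζ.pow_three_eq_neg_one_of_six]
  ring

theorem exists_fin_pow_eq {n : ℕ} [NeZero n] (hζ : IsPrimitiveRoot ζ n) {x : R}
    (hx : x ^ n = 1) : ∃ i : Fin n, x = ζ ^ (i : ℕ) :=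
  let ⟨a, ha, h⟩ := hζ.eq_pow_of_pow_eq_one hx
  ⟨⟨a, ha⟩, h.symm⟩

variable [DecidableEq R]

theorem sum_ite_ne_eq {ω : R} (hω : IsPrimitiveRoot ω 3) {x y : R} (hx : x ^ 3 = 1)
    (hy : y ^ 3 = 1) :
    ∑ i : Fin 3, ∑ j : Fin 3, (if i ≠ j ∧ x = ω ^ (i : ℕ) ∧ y = ω ^ (j : ℕ) then 1 else 0 : ℕ) =
      if x = y then 0 else 1 := by
  have key : ∀ i j : Fin 3, ω ^ (i : ℕ) = ω ^ (j : ℕ) ↔ i = j := fun i j =>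
    ⟨fun h => Fin.ext (hω.pow_inj i.isLt j.isLt h), fun h => h ▸ rfl⟩
  obtain ⟨A, rfl⟩ := hω.exists_fin_pow_eq hx
  obtain ⟨B, rfl⟩ := hω.exists_fin_pow_eq hy
  simp only [key]
  fin_cases A <;> fin_cases B <;> decide

/-- For sixth roots of unity `x, y`, the right-hand side vanishes unless `x³ = y³ = 1`, and then
it is `8 - 4xy(x + y)`, which is `12` or `0` according as `x ≠ y` or `x = y`. -/
theorem twelve_mul_sum_ite_ne_eq (hζ : IsPrimitiveRoot ζ 6) {x y : R} (hx : x ^ 6 = 1)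
    (hy : y ^ 6 = 1) :
    12 * ((∑ i : Fin 3, ∑ j : Fin 3,
      if i ≠ j ∧ x = (ζ ^ 2) ^ (i : ℕ) ∧ y = (ζ ^ 2) ^ (j : ℕ) then 1 else 0 : ℕ) : R) =
      2 * (1 + x ^ 3) * (1 + y ^ 3) - (x ^ 2 + x ^ 5) * (y ^ 4 + y) -
        (x ^ 4 + x) * (y ^ 2 + y ^ 5) := by
  have hω : IsPrimitiveRoot (ζ ^ 2) 3 := hζ.pow_of_dvd two_ne_zero (by norm_num)
  have hcube : ∀ z : R, z ^ 6 = 1 → z ^ 3 = 1 ∨ z ^ 3 = -1 := fun z hz =>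
    sq_eq_one_iff.mp (by rw [← pow_mul]; exact hz)
  have hneg : ∀ z : R, z ^ 3 = -1 → ∀ i : Fin 3, z ≠ (ζ ^ 2) ^ (i : ℕ) := by
    rintro z hz i rfl
    have h1 : (1 : R) = -1 := by
      rw [← hz, ← pow_mul, ← pow_mul, show 2 * ((i : ℕ) * 3) = 6 * i by ring, pow_mul,
        hζ.pow_eq_one, one_pow]
    exact hζ.pow_ne_one_of_pos_of_lt three_ne_zero (by norm_num)
      (by rw [hζ.pow_three_eq_neg_one_of_six, ← h1])
  rcases hcube x hx with hx3 | hx3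
  · rcases hcube y hy with hy3 | hy3
    · rw [hω.sum_ite_ne_eq hx3 hy3, show x ^ 4 = x by linear_combination x * hx3,
        show x ^ 5 = x ^ 2 by linear_combination x ^ 2 * hx3,
        show y ^ 4 = y by linear_combination y * hy3,
        show y ^ 5 = y ^ 2 by linear_combination y ^ 2 * hy3, hx3, hy3]
      split_ifs with hxy
      · subst hxy
        push_cast
        linear_combination 8 * hx3
      · have hsum : x ^ 2 + x * y + y ^ 2 = 0 := by
          refine (mul_eq_zero.mp ?_).resolve_left (sub_ne_zero.mpr hxy)
          linear_combination hx3 - hy3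
        push_cast
        linear_combination 2 * (x + y) * hsum - 2 * hx3 - 2 * hy3
    · rw [sum_eq_zero fun i _ => sum_eq_zero fun j _ => if_neg fun h => hneg y hy3 j h.2.2]
      push_cast
      linear_combination ((x ^ 2 + x ^ 5) * y + (x ^ 4 + x) * y ^ 2 - 2 * (1 + x ^ 3)) * hy3
  · rw [sum_eq_zero fun i _ => sum_eq_zero fun j _ => if_neg fun h => hneg x hx3 i h.2.1]
    push_cast
    linear_combination (x ^ 2 * (y ^ 4 + y) + x * (y ^ 2 + y ^ 5) - 2 * (1 + y ^ 3)) * hx3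

end Domain

section Complex

variable {ζ : ℂ}

theorem conj_eq_one_sub_of_six (hζ : IsPrimitiveRoot ζ 6) : conj ζ = 1 - ζ := by
  rw [← Complex.inv_eq_conj (hζ.norm'_eq_one (by norm_num))]
  exact inv_eq_of_mul_eq_one_right (by linear_combination -hζ.sq_eq_sub_one_of_six)

theorem intCast_add_mul_inj_of_six (hζ : IsPrimitiveRoot ζ 6) {m n m' n' : ℤ}
    (h : (m : ℂ) + n * ζ = m' + n' * ζ) : m = m' ∧ n = n' := by
  have him : ζ.im ≠ 0 := by
    intro h0
    have hre := congrArg Complex.re hζ.sq_eq_sub_one_of_six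
    simp only [pow_two, Complex.mul_re, h0, mul_zero, sub_zero, Complex.sub_re,
      Complex.one_re] at hre
    nlinarith [sq_nonneg (ζ.re - 1 / 2)]
  have hn : n = n' := by
    have := congrArg Complex.im h
    simp only [Complex.add_im, Complex.intCast_im, Complex.mul_im, Complex.intCast_re,
      zero_add, zero_mul, add_zero] at this
    exact_mod_cast mul_right_cancel₀ him this
  subst hn
  exact ⟨by exact_mod_cast add_right_cancel h, rfl⟩

end Complex

end IsPrimitiveRoot

theorem sq_eq_one_of_sq_add_three_mul_sq_of_dvd {p c a b : ℤ} (hpc : p = 1 + 3 * c ^ 2)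
    (hab : a ^ 2 + 3 * b ^ 2 = p) (hdvd : p ∣ a + 3 * b * c) : a ^ 2 = 1 := by
  obtain ⟨k, hk⟩ := hdvd
  have hp0 : 0 < p := by nlinarith
  -- `(a + 3bc)² + 3(ac - b)² = (a² + 3b²)(1 + 3c²) = p²`
  have hsq : 3 * (a * c - b) ^ 2 = p ^ 2 * (1 - k ^ 2) := by
    linear_combination (1 + 3 * c ^ 2) * hab - p * hpc - (a + 3 * b * c + p * k) * hk
  have hk1 : k ^ 2 ≤ 1 := by nlinarith [sq_nonneg (a * c - b)]
  have hk0 : k ≠ 0 := by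
    rintro rfl
    have h3 : (3 : ℤ) ∣ p * p := ⟨(a * c - b) ^ 2, by linear_combination -hsq⟩
    rcases Int.prime_three.dvd_mul.mp h3 with h | h <;> omega
  have hb : b = a * c := by
    have : k ^ 2 = 1 := by nlinarith [sq_pos_of_ne_zero hk0]
    nlinarith [sq_nonneg (a * c - b)]
  subst hb
  have : (a ^ 2 - 1) * p = 0 := by linear_combination a ^ 2 * hpc + hab
  nlinarith [mul_eq_zero.mp this]

theorem eq_neg_one_of_sq_add_three_mul_sq_eq {p c a b : ℤ} (hp : Prime p)
    (hpc : p = 1 + 3 * c ^ 2) (hab : a ^ 2 + 3 * b ^ 2 = p) (ha : 3 ∣ a + 1) : a = -1 := by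
  have hprod : p ∣ (a + 3 * b * c) * (a + 3 * (-b) * c) :=
    ⟨1 - 3 * b ^ 2, by linear_combination hab + 3 * b ^ 2 * hpc⟩
  have ha2 : a ^ 2 = 1 := by
    rcases hp.dvd_mul.mp hprod with h | h
    · exact sq_eq_one_of_sq_add_three_mul_sq_of_dvd hpc hab h
    · exact sq_eq_one_of_sq_add_three_mul_sq_of_dvd hpc (by linear_combination hab) h
  rcases sq_eq_one_iff.mp ha2 with rfl | rfl
  · omega
  · rfl

theorem exists_sum_eq_sum_add_mul {ι A : Type*} [CommRing A] {S : Subalgebra ℤ A} (s : Finset ι)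
    {f g : ι → A} {c : A} (h : ∀ i ∈ s, ∃ z ∈ S, f i = g i + z * c) :
    ∃ z ∈ S, ∑ i ∈ s, f i = ∑ i ∈ s, g i + z * c := by
  choose! z hzS hz using h
  exact ⟨∑ i ∈ s, z i, sum_mem hzS, by rw [sum_mul, ← sum_add_distrib]; exact sum_congr rfl hz⟩

section JacobiSum

variable {F : Type*} [Field F] {R : Type*} [CommRing R] {χ : MulChar F R}

theorem pow_six_eq_one_of_orderOf_eq_six (hχ : orderOf χ = 6) : χ ^ 6 = 1 :=
  hχ ▸ pow_orderOf_eq_one χ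

theorem pow_ne_one_of_orderOf_eq_six (hχ : orderOf χ = 6) {k : ℕ} (h0 : k ≠ 0) (hk : k < 6) :
    χ ^ k ≠ 1 :=
  pow_ne_one_of_lt_orderOf h0 (hχ ▸ hk)

theorem pow_pow_six_eq_one (hχ : orderOf χ = 6) (k : ℕ) : (χ ^ k) ^ 6 = 1 := by
  rw [← pow_mul, mul_comm, pow_mul, pow_six_eq_one_of_orderOf_eq_six hχ, one_pow]

theorem inv_pow_eq_pow_of_orderOf_eq_six (hχ : orderOf χ = 6) {k l : ℕ} (hkl : k + l = 6) :
    (χ ^ k)⁻¹ = χ ^ l :=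
  inv_eq_of_mul_eq_one_right (by rw [← pow_add, hkl, pow_six_eq_one_of_orderOf_eq_six hχ])

variable [Fintype F] [IsDomain R]

theorem jacobiSum_pow_pow_eq_neg_one (hχ : orderOf χ = 6) {k l : ℕ} (h0 : k ≠ 0)
    (hk : k < 6) (hkl : k + l = 6) (h1 : (χ ^ k) (-1) = 1) :
    jacobiSum (χ ^ k) (χ ^ l) = -1 := by
  rw [← inv_pow_eq_pow_of_orderOf_eq_six hχ hkl,
    jacobiSum_nontrivial_inv (pow_ne_one_of_orderOf_eq_six hχ h0 hk), h1]

theorem jacobiSum_pow_three_pow_six (hχ : orderOf χ = 6) :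
    jacobiSum (χ ^ 3) (χ ^ 6) = -1 := by
  rw [pow_six_eq_one_of_orderOf_eq_six hχ, jacobiSum_comm,
    jacobiSum_one_nontrivial (pow_ne_one_of_orderOf_eq_six hχ three_ne_zero (by norm_num))]

end JacobiSum

section Eisenstein

variable {F : Type*} [Field F] [Fintype F] {χ : MulChar F ℂ} {ζ : ℂ}

theorem conj_jacobiSum (ψ ψ' : MulChar F ℂ) :
    conj (jacobiSum ψ ψ') = jacobiSum ψ⁻¹ ψ'⁻¹ := by
  rw [← MulChar.star_eq_inv, ← MulChar.star_eq_inv]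
  exact (jacobiSum_ringHomComp ψ ψ' (starRingEnd ℂ)).symm

theorem exists_jacobiSum_eq_neg_one_add_mul_two (hχ : orderOf χ = 6)
    (hζ : IsPrimitiveRoot ζ 6) :
    ∃ z ∈ Algebra.adjoin ℤ {ζ}, jacobiSum χ (χ ^ 2) = -1 + z * 2 := by
  have h4 : jacobiSum (χ ^ 4) (χ ^ 2) = -1 :=
    jacobiSum_pow_pow_eq_neg_one hχ four_ne_zero (by norm_num) rfl (by
      rw [MulChar.pow_apply' _ four_ne_zero, show 4 = 2 * 2 from rfl, pow_mul, ← map_pow,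
        neg_one_sq, map_one, one_pow])
  rw [← h4, jacobiSum, jacobiSum]
  refine exists_sum_eq_sum_add_mul _ fun x _ => ?_
  rcases eq_or_ne x 0 with rfl | hx
  · exact ⟨0, zero_mem _, by simp [MulChar.map_zero]⟩
  obtain ⟨r, -, hr⟩ :=
    MulChar.exists_apply_eq_pow (pow_six_eq_one_of_orderOf_eq_six hχ) hζ hx
  obtain ⟨z, hz, hzr⟩ := hζ.exists_pow_eq_pow_pow_four_add_mul_two r
  refine ⟨z * (χ ^ 2) (1 - x), mul_mem hz
    (MulChar.apply_mem_algebraAdjoin_of_pow_eq_one (pow_pow_six_eq_one hχ 2) hζ _), ?_⟩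
  rw [MulChar.pow_apply' χ four_ne_zero, hr]
  linear_combination (χ ^ 2) (1 - x) * hzr

theorem exists_jacobiSum_eq_neg_one_add_mul_add_one (hχ : orderOf χ = 6)
    (hζ : IsPrimitiveRoot ζ 6) :
    ∃ z ∈ Algebra.adjoin ℤ {ζ}, jacobiSum χ (χ ^ 2) = -1 + z * (ζ + 1) := by
  rw [← jacobiSum_pow_three_pow_six hχ, jacobiSum, jacobiSum]
  refine exists_sum_eq_sum_add_mul _ fun x _ => ?_
  have hcube : (χ ^ 3) x * (χ ^ 6) (1 - x) = (χ x * (χ ^ 2) (1 - x)) ^ 3 := by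
    rw [show χ ^ 6 = (χ ^ 2) ^ 3 by rw [← pow_mul], MulChar.pow_apply' _ three_ne_zero,
      MulChar.pow_apply' _ three_ne_zero, mul_pow]
  rw [hcube]
  rcases eq_or_ne x 0 with rfl | hx
  · exact ⟨0, zero_mem _, by simp [MulChar.map_zero]⟩
  rcases eq_or_ne (1 - x) 0 with hx' | hx'
  · exact ⟨0, zero_mem _, by simp [hx', MulChar.map_zero]⟩
  obtain ⟨k, -, hk⟩ :=
    MulChar.exists_apply_eq_pow (pow_six_eq_one_of_orderOf_eq_six hχ) hζ hx
  obtain ⟨l, -, hl⟩ := MulChar.exists_apply_eq_pow (pow_pow_six_eq_one hχ 2) hζ hx'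
  rw [hk, hl, ← pow_add]
  exact hζ.exists_pow_eq_pow_pow_three_add_mul (k + l)

theorem jacobiSum_mul_conj (hχ : orderOf χ = 6) :
    jacobiSum χ (χ ^ 2) * conj (jacobiSum χ (χ ^ 2)) = Fintype.card F := by
  have hchar : ringChar ℂ ≠ ringChar F := by
    rw [ringChar.eq_zero]
    exact (CharP.ringChar_ne_zero_of_finite F).symm
  rw [conj_jacobiSum]
  refine jacobiSum_mul_jacobiSum_inv hchar ?_ ?_ ?_
  · simpa using pow_ne_one_of_orderOf_eq_six hχ one_ne_zero (by norm_num)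
  · exact pow_ne_one_of_orderOf_eq_six hχ two_ne_zero (by norm_num)
  · rw [← pow_succ']
    exact pow_ne_one_of_orderOf_eq_six hχ three_ne_zero (by norm_num)

/-- Writing `J(χ, χ²) = m + n ζ` for a primitive sixth root `ζ`, the congruences modulo `2` and
modulo `ζ + 1` make `n` even and `3 ∣ m - n + 1`, so that `a = m + n / 2`, `b = n / 2` work. -/
theorem exists_jacobiSum_add_conj_eq (hχ : orderOf χ = 6) :
    ∃ a b : ℤ, a ^ 2 + 3 * b ^ 2 = Fintype.card F ∧ 3 ∣ a + 1 ∧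
      jacobiSum χ (χ ^ 2) + conj (jacobiSum χ (χ ^ 2)) = 2 * a := by
  have hζ : IsPrimitiveRoot (Complex.exp (2 * Real.pi * Complex.I / 6)) 6 :=
    Complex.isPrimitiveRoot_exp 6 (by norm_num)
  set ζ := Complex.exp (2 * Real.pi * Complex.I / 6)
  obtain ⟨z, hz, hJ⟩ := exists_jacobiSum_eq_neg_one_add_mul_two hχ hζ
  obtain ⟨z', hz', hJ'⟩ := exists_jacobiSum_eq_neg_one_add_mul_add_one hχ hζ
  obtain ⟨u, v, rfl⟩ := hζ.exists_eq_add_mul_of_mem_adjoin hz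
  obtain ⟨u', v', rfl⟩ := hζ.exists_eq_add_mul_of_mem_adjoin hz'
  have hsq := hζ.sq_eq_sub_one_of_six
  obtain ⟨hu, hv⟩ : 2 * u - 1 = u' - v' - 1 ∧ 2 * v = u' + 2 * v' := by
    apply hζ.intCast_add_mul_inj_of_six
    push_cast
    linear_combination hJ' - hJ + (v' : ℂ) * hsq
  have hnorm := jacobiSum_mul_conj hχ
  rw [hJ, map_add, map_mul, map_neg, map_one, map_add, map_mul, map_ofNat, map_intCast,
    map_intCast, hζ.conj_eq_one_sub_of_six] at hnorm ⊢
  refine ⟨2 * u - 1 + v, v, ?_, by omega, by push_cast; ring⟩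
  exact_mod_cast (show ((2 * u - 1 + v : ℤ) : ℂ) ^ 2 + 3 * (v : ℂ) ^ 2 = Fintype.card F by
    push_cast; linear_combination hnorm + 4 * (v : ℂ) ^ 2 * hsq)

end Eisenstein

theorem jacobiSum_add_conj_eq_neg_two {p c : ℕ} [Fact p.Prime] {χ : MulChar (ZMod p) ℂ}
    (hχ : orderOf χ = 6) (hp : p = 1 + 3 * c ^ 2) :
    jacobiSum χ (χ ^ 2) + conj (jacobiSum χ (χ ^ 2)) = -2 := by
  obtain ⟨a, b, hab, ha, hJ⟩ := exists_jacobiSum_add_conj_eq hχ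
  rw [ZMod.card] at hab
  have hp' : Prime (p : ℤ) := Nat.prime_iff_prime_int.mp Fact.out
  rw [hJ, eq_neg_one_of_sq_add_three_mul_sq_eq (c := c) hp' (by exact_mod_cast hp) hab ha]
  norm_num

section OuterCount

variable {G : Type*} [AddCommGroup G] [Fintype G] [DecidableEq G]

theorem card_filter_sub_eq (A B : Finset G) (d : G) :
    #((A ×ˢ B).filter fun q => q.1 - q.2 = d) = #(univ.filter fun x => x ∈ A ∧ x - d ∈ B) := by
  refine card_nbij' Prod.fst (fun x => (x, x - d)) ?_ ?_ ?_ ?_ <;>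
    simp +contextual [Set.MapsTo, Set.LeftInvOn]
  all_goals rintro a b - hb rfl; simp [hb]

theorem outerCount_eq_sum {ι : Type*} [Fintype ι] [DecidableEq ι] (Q : ι → Finset G) (d : G) :
    outerCount Q d = ∑ x : G, ∑ i, ∑ j, if i ≠ j ∧ x ∈ Q i ∧ x - d ∈ Q j then (1 : ℕ) else 0 := by
  have h : ∀ i j, (if i = j then 0 else #((Q i ×ˢ Q j).filter fun q => q.1 - q.2 = d)) =
      ∑ x : G, if i ≠ j ∧ x ∈ Q i ∧ x - d ∈ Q j then (1 : ℕ) else 0 := by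
    intro i j
    rw [card_filter_sub_eq, card_filter]
    split_ifs with hij <;> simp [hij]
  simp only [outerCount, h]
  calc _ = ∑ i, ∑ x, ∑ j, if i ≠ j ∧ x ∈ Q i ∧ x - d ∈ Q j then (1 : ℕ) else 0 :=
        sum_congr rfl fun _ _ => sum_comm
    _ = _ := sum_comm

end OuterCount

section CharacterSums

variable {F : Type*} [Field F] [Fintype F] {R : Type*} [CommRing R]

theorem sum_mul_apply_sub_eq (ψ ψ' : MulChar F R) {d : F} (hd : d ≠ 0) :
    ∑ a, ψ a * ψ' (a - d) = ψ d * ψ' (-d) * jacobiSum ψ ψ' := by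
  rw [jacobiSum, mul_sum]
  refine (Fintype.sum_equiv (Equiv.mulLeft₀ d hd) _ _ fun x => ?_).symm
  rw [Equiv.mulLeft₀_apply, show d * x - d = -d * (1 - x) by ring, map_mul, map_mul]
  ring

/-- For `a, b ≠ 0` this is twelve times the number of ordered pairs of distinct classes among
`C_0^6, C_2^6, C_4^6` that contain `a` and `b` respectively. -/
noncomputable def outerWeight (χ : MulChar F R) (a b : F) : R :=
  2 * ((χ ^ 0) a + (χ ^ 3) a) * ((χ ^ 0) b + (χ ^ 3) b) -
    ((χ ^ 2) a + (χ ^ 5) a) * ((χ ^ 4) b + (χ ^ 1) b) -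
    ((χ ^ 4) a + (χ ^ 1) a) * ((χ ^ 2) b + (χ ^ 5) b)

theorem sum_outerWeight_eq {χ : MulChar F ℂ} (hχ : orderOf χ = 6) (hχ1 : χ (-1) = 1)
    (hJ : jacobiSum χ (χ ^ 2) + conj (jacobiSum χ (χ ^ 2)) = -2) {d : F} (hd : d ≠ 0) :
    ∑ a, outerWeight χ a (a - d) = 2 * Fintype.card F - 2 := by
  have hpow1 : ∀ k : ℕ, (χ ^ k) (-1) = 1 := fun k => by
    rw [show (-1 : F) = ((-1 : Fˣ) : F) by simp, MulChar.pow_apply_coe, Units.val_neg,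
      Units.val_one, hχ1, one_pow]
  have hshift : ∀ k l : ℕ, ∑ a, (χ ^ k) a * (χ ^ l) (a - d) =
      (χ ^ k) d * (χ ^ l) d * jacobiSum (χ ^ k) (χ ^ l) := fun k l => by
    rw [sum_mul_apply_sub_eq _ _ hd, neg_eq_neg_one_mul, map_mul, hpow1, one_mul]
  have hJinv : ∀ k l : ℕ, k ≠ 0 → k < 6 → k + l = 6 → jacobiSum (χ ^ k) (χ ^ l) = -1 :=
    fun k l h0 hk hkl => jacobiSum_pow_pow_eq_neg_one hχ h0 hk hkl (hpow1 k)
  have hconj : conj (jacobiSum χ (χ ^ 2)) = jacobiSum (χ ^ 5) (χ ^ 4) := by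
    rw [conj_jacobiSum, inv_pow_eq_pow_of_orderOf_eq_six hχ (k := 2) (l := 4) rfl,
      ← inv_pow_eq_pow_of_orderOf_eq_six hχ (k := 1) (l := 5) rfl, pow_one]
  have hu6 : χ d ^ 6 = 1 := by
    rw [← MulChar.pow_apply' _ (by norm_num), pow_six_eq_one_of_orderOf_eq_six hχ,
      MulChar.one_apply (isUnit_iff_ne_zero.mpr hd)]
  simp only [outerWeight, mul_add, add_mul, sum_add_distrib, sum_sub_distrib, mul_assoc,
    ← mul_sum, hshift]
  rw [hJinv 3 3 (by norm_num) (by norm_num) rfl, hJinv 2 4 (by norm_num) (by norm_num) rfl,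
    hJinv 4 2 (by norm_num) (by norm_num) rfl, hJinv 1 5 (by norm_num) (by norm_num) rfl,
    hJinv 5 1 (by norm_num) (by norm_num) rfl, jacobiSum_comm (χ ^ 2) (χ ^ 1),
    jacobiSum_comm (χ ^ 4), ← hconj, pow_zero, jacobiSum_one_one, jacobiSum_comm _ 1,
    jacobiSum_one_nontrivial (pow_ne_one_of_orderOf_eq_six hχ three_ne_zero (by norm_num)),
    pow_one, MulChar.one_apply (isUnit_iff_ne_zero.mpr hd), MulChar.pow_apply' χ two_ne_zero,
    MulChar.pow_apply' χ three_ne_zero, MulChar.pow_apply' χ four_ne_zero,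
    MulChar.pow_apply' χ (by norm_num : 5 ≠ 0)]
  -- with `u = χ d`, the left side is `2 * #F - 2 - 2 * u ^ 3 * (J + conj J + 2)` once `u ^ 6 = 1`
  linear_combination (2 - 2 * χ d ^ 3 * conj (jacobiSum χ (χ ^ 2))) * hu6 -
    2 * χ d ^ 3 * hJ

end CharacterSums

def cyclotomicClass {p : ℕ} (g : ZMod p) (e m i : ℕ) : Finset (ZMod p) :=
  (range m).image fun t => g ^ (i + e * t)

section CyclotomicClass

variable {p : ℕ} {g : ZMod p} {e m i j : ℕ}

theorem card_cyclotomicClass (hg : IsPrimitiveRoot g (p - 1)) (hm : p - 1 = e * m) (hi : i < e) :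
    #(cyclotomicClass g e m i) = m := by
  rw [cyclotomicClass, card_image_of_injOn, card_range]
  intro t ht t' ht' h
  simp only [coe_range, Set.mem_Iio] at ht ht'
  have := hg.pow_inj (by rw [hm]; nlinarith) (by rw [hm]; nlinarith) h
  exact Nat.eq_of_mul_eq_mul_left (by omega) (Nat.add_left_cancel this)

theorem disjoint_cyclotomicClass (hg : IsPrimitiveRoot g (p - 1)) (hm : p - 1 = e * m)
    (hi : i < e) (hj : j < e) (hij : i ≠ j) :
    Disjoint (cyclotomicClass g e m i) (cyclotomicClass g e m j) := by
  simp only [cyclotomicClass, disjoint_left, mem_image, mem_range, not_exists, not_and]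
  rintro _ ⟨t, ht, rfl⟩ t' ht' h
  have := congrArg (· % e) (hg.pow_inj (by rw [hm]; nlinarith) (by rw [hm]; nlinarith) h)
  simp only [Nat.add_mul_mod_self_left, Nat.mod_eq_of_lt hi, Nat.mod_eq_of_lt hj] at this
  exact hij this.symm

variable [Fact p.Prime]

theorem IsPrimitiveRoot.exists_pow_eq_of_ne_zero (hg : IsPrimitiveRoot g (p - 1)) {x : ZMod p}
    (hx : x ≠ 0) : ∃ s < p - 1, g ^ s = x :=
  have : NeZero (p - 1) := ⟨Nat.sub_ne_zero_of_lt (Fact.out : p.Prime).one_lt⟩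
  hg.eq_pow_of_pow_eq_one (ZMod.pow_card_sub_one_eq_one hx)

variable {R : Type*} [CommRing R] {χ : MulChar (ZMod p) R} {ζ : R}

theorem orderOf_eq_of_apply_eq (hg : IsPrimitiveRoot g (p - 1)) (hζ : IsPrimitiveRoot ζ e)
    (hχ : χ g = ζ) (he : 0 < e) : orderOf χ = e := by
  have hg0 : IsUnit g :=
    isUnit_iff_ne_zero.mpr (hg.ne_zero (Nat.sub_ne_zero_of_lt (Fact.out : p.Prime).one_lt))
  rw [orderOf_eq_iff he]
  refine ⟨MulChar.ext fun u => ?_, fun k hk hk0 h => ?_⟩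
  · obtain ⟨s, -, hs⟩ := hg.exists_pow_eq_of_ne_zero u.ne_zero
    rw [MulChar.one_apply_coe, MulChar.pow_apply' _ he.ne', ← hs, map_pow, hχ, ← pow_mul,
      mul_comm, pow_mul, hζ.pow_eq_one, one_pow]
  · have := congrArg (· g) h
    simp only [MulChar.pow_apply' _ hk0.ne', hχ, MulChar.one_apply hg0] at this
    exact hζ.pow_ne_one_of_pos_of_lt hk0.ne' hk this

theorem apply_neg_one_eq_one (hg : IsPrimitiveRoot g (p - 1)) (hζ : IsPrimitiveRoot ζ e)
    (hχ : χ g = ζ) (he : 2 * e ∣ p - 1) : χ (-1) = 1 := by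
  obtain ⟨k, hk⟩ := he
  have hek : e * k ≠ 0 := by
    have := (Fact.out : p.Prime).two_le
    intro h
    rw [mul_assoc, h] at hk
    omega
  have hneg : g ^ (e * k) = -1 := by
    have h2 := hg.pow_of_dvd hek ⟨2, by rw [hk]; ring⟩
    rw [hk, show 2 * e * k = e * k * 2 by ring,
      Nat.mul_div_cancel_left _ (Nat.pos_of_ne_zero hek)] at h2
    exact h2.eq_neg_one_of_two_right
  rw [← hneg, map_pow, hχ, pow_mul, hζ.pow_eq_one, one_pow]

variable [IsDomain R]

theorem mem_cyclotomicClass_iff (hg : IsPrimitiveRoot g (p - 1)) (hm : p - 1 = e * m)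
    (hζ : IsPrimitiveRoot ζ e) (hχ : χ g = ζ) (hi : i < e) {x : ZMod p} :
    x ∈ cyclotomicClass g e m i ↔ χ x = ζ ^ i := by
  constructor
  · intro hx
    obtain ⟨t, -, rfl⟩ := mem_image.mp hx
    rw [map_pow, hχ, pow_add, pow_mul, hζ.pow_eq_one, one_pow, mul_one]
  · intro hx
    have hx0 : x ≠ 0 := by
      rintro rfl
      exact pow_ne_zero i (hζ.ne_zero (by omega)) (χ.map_zero ▸ hx).symm
    obtain ⟨s, hs, rfl⟩ := hg.exists_pow_eq_of_ne_zero hx0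
    rw [map_pow, hχ, ← pow_mod_orderOf, ← hζ.eq_orderOf] at hx
    have hsi : s % e = i := hζ.pow_inj (Nat.mod_lt _ (by omega)) hi hx
    refine mem_image.mpr ⟨s / e, mem_range.mpr (Nat.div_lt_of_lt_mul (hm ▸ hs)), ?_⟩
    rw [← hsi, Nat.mod_add_div]

variable [DecidableEq R]

theorem twelve_mul_sum_ite_eq_outerWeight (hg : IsPrimitiveRoot g (p - 1)) (hm : p - 1 = 6 * m)
    (hζ : IsPrimitiveRoot ζ 6) (hχ : χ g = ζ) (a b : ZMod p) :
    12 * ((∑ i : Fin 3, ∑ j : Fin 3, if i ≠ j ∧ a ∈ cyclotomicClass g 6 m (2 * i) ∧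
      b ∈ cyclotomicClass g 6 m (2 * j) then 1 else 0 : ℕ) : R) = outerWeight χ a b := by
  have hmem : ∀ (x : ZMod p) (i : Fin 3),
      x ∈ cyclotomicClass g 6 m (2 * i) ↔ χ x = (ζ ^ 2) ^ (i : ℕ) := fun x i => by
    rw [mem_cyclotomicClass_iff hg hm hζ hχ (by omega), pow_mul]
  have hval : ∀ x : ZMod p, x ≠ 0 → χ x ^ 6 = 1 := fun x hx => by
    rw [← MulChar.pow_apply' _ (by norm_num),
      pow_six_eq_one_of_orderOf_eq_six (orderOf_eq_of_apply_eq hg hζ hχ (by norm_num)),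
      MulChar.one_apply (isUnit_iff_ne_zero.mpr hx)]
  have hne : ∀ i : Fin 3, χ 0 ≠ (ζ ^ 2) ^ (i : ℕ) := fun i => by
    rw [MulChar.map_zero]
    exact (pow_ne_zero _ (pow_ne_zero 2 (hζ.ne_zero (by norm_num)))).symm
  simp only [hmem]
  rcases eq_or_ne a 0 with rfl | ha
  · rw [sum_eq_zero fun i _ => sum_eq_zero fun j _ => if_neg fun h => hne i h.2.1]
    simp [outerWeight, MulChar.map_zero]
  rcases eq_or_ne b 0 with rfl | hb
  · rw [sum_eq_zero fun i _ => sum_eq_zero fun j _ => if_neg fun h => hne j h.2.2]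
    simp [outerWeight, MulChar.map_zero]
  rw [outerWeight, pow_zero, MulChar.one_apply (isUnit_iff_ne_zero.mpr ha),
    MulChar.one_apply (isUnit_iff_ne_zero.mpr hb), pow_one]
  simp only [MulChar.pow_apply' χ (by norm_num : (2 : ℕ) ≠ 0), MulChar.pow_apply' χ three_ne_zero,
    MulChar.pow_apply' χ four_ne_zero, MulChar.pow_apply' χ (by norm_num : (5 : ℕ) ≠ 0)]
  exact hζ.twelve_mul_sum_ite_ne_eq (hval a ha) (hval b hb)

end CyclotomicClass

theorem outerCount_cyclotomicClass_eq {p n : ℕ} [Fact p.Prime] {g : ZMod p}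
    (hg : IsPrimitiveRoot g (p - 1)) (hp : p = 12 * n ^ 2 + 1) {χ : MulChar (ZMod p) ℂ} {ζ : ℂ}
    (hζ : IsPrimitiveRoot ζ 6) (hχ : χ g = ζ) {d : ZMod p} (hd : d ≠ 0) :
    outerCount (fun i : Fin 3 => cyclotomicClass g 6 (2 * n ^ 2) (2 * i)) d = 2 * n ^ 2 := by
  have hχ6 := orderOf_eq_of_apply_eq hg hζ hχ (by norm_num)
  have hsum := sum_outerWeight_eq hχ6 (apply_neg_one_eq_one hg hζ hχ ⟨n ^ 2, by omega⟩)
    (jacobiSum_add_conj_eq_neg_two hχ6 (c := 2 * n) (by rw [hp]; ring)) hd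
  simp only [← twelve_mul_sum_ite_eq_outerWeight hg (by omega : p - 1 = 6 * (2 * n ^ 2)) hζ hχ,
    ← mul_sum, ZMod.card, hp] at hsum
  rw [outerCount_eq_sum]
  refine Nat.cast_injective (R := ℂ) (mul_left_cancel₀ (by norm_num : (12 : ℂ) ≠ 0) ?_)
  rw [Nat.cast_sum, hsum]
  push_cast
  ring

theorem exists_mulChar_apply_eq {p : ℕ} [Fact p.Prime] {R : Type*} [CommMonoidWithZero R]
    {α : (ZMod p)ˣ} (hα : ∀ x : (ZMod p)ˣ, x ∈ Subgroup.zpowers α) {ζ : R}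
    (hζ : ζ ^ (p - 1) = 1) : ∃ χ : MulChar (ZMod p) R, χ α = ζ := by
  have hu := IsUnit.of_pow_eq_one hζ (Nat.sub_ne_zero_of_lt (Fact.out : p.Prime).one_lt)
  have hmem : hu.unit ∈ rootsOfUnity (Fintype.card (ZMod p)ˣ) R := by
    rw [mem_rootsOfUnity, ZMod.card_units, Units.ext_iff, Units.val_pow_eq_pow_val]
    simpa using hζ
  exact ⟨MulChar.ofRootOfUnity hmem hα, MulChar.ofRootOfUnity_spec hmem hα⟩

theorem stmt_10_general (n p : ℕ) (hp : p = 12 * n ^ 2 + 1) (hprime : p.Prime)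
    (α : (ZMod p)ˣ) (hα : ∀ x : (ZMod p)ˣ, x ∈ Subgroup.zpowers α) :
    -- the 6th-power cyclotomic classes C_i^6 = {α^(i+6t) : 0 ≤ t < 2n²}
    let C : ℕ → Finset (ZMod p) := fun i =>
      (Finset.range (2 * n ^ 2)).image (fun t => ((α : ZMod p)) ^ (i + 6 * t))
    -- {C_0^6, C_2^6, C_4^6} is a perfect regular DSS(12n²+1, 2n², 3, 2n²)
    (∀ i ∈ ({0, 2, 4} : Finset ℕ), (C i).card = 2 * n ^ 2) ∧
    (∀ i ∈ ({0, 2, 4} : Finset ℕ), ∀ j ∈ ({0, 2, 4} : Finset ℕ), i ≠ j → Disjoint (C i) (C j)) ∧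
    (∀ d : ZMod p, d ≠ 0 → outerCount ![C 0, C 2, C 4] d = 2 * n ^ 2) := by
  intro C
  have : Fact p.Prime := ⟨hprime⟩
  have hg : IsPrimitiveRoot (α : ZMod p) (p - 1) := by
    rw [IsPrimitiveRoot.coe_units_iff, ← ZMod.card_units p, ← Nat.card_eq_fintype_card,
      ← orderOf_eq_card_of_forall_mem_zpowers hα]
    exact IsPrimitiveRoot.orderOf α
  have hm : p - 1 = 6 * (2 * n ^ 2) := by omega
  have hζ := Complex.isPrimitiveRoot_exp 6 (by norm_num)
  obtain ⟨χ, hχ⟩ := exists_mulChar_apply_eq hα ((hζ.pow_eq_one_iff_dvd _).mpr ⟨2 * n ^ 2, hm⟩)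
  have hC : ![C 0, C 2, C 4] =
      fun i : Fin 3 => cyclotomicClass (α : ZMod p) 6 (2 * n ^ 2) (2 * i) :=
    funext fun i => by fin_cases i <;> rfl
  have hlt : ∀ i ∈ ({0, 2, 4} : Finset ℕ), i < 6 := by simp
  refine ⟨fun i hi => card_cyclotomicClass hg hm (hlt i hi),
    fun i hi j hj hij => disjoint_cyclotomicClass hg hm (hlt i hi) (hlt j hj) hij,
    fun d hd => hC ▸ outerCount_cyclotomicClass_eq hg hp hζ hχ hd⟩

theorem stmt_10 (n p : ℕ) (hp : p = 12 * n ^ 2 + 1) (hprime : p.Prime) (hodd : Odd p)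
    (α : (ZMod p)ˣ) (hα : ∀ x : (ZMod p)ˣ, x ∈ Subgroup.zpowers α) :
    -- the 6th-power cyclotomic classes C_i^6 = {α^(i+6t) : 0 ≤ t < 2n²}
    let C : ℕ → Finset (ZMod p) := fun i =>
      (Finset.range (2 * n ^ 2)).image (fun t => ((α : ZMod p)) ^ (i + 6 * t))
    -- {C_0^6, C_2^6, C_4^6} is a perfect regular DSS(12n²+1, 2n², 3, 2n²)
    (∀ i ∈ ({0, 2, 4} : Finset ℕ), (C i).card = 2 * n ^ 2) ∧
    (∀ i ∈ ({0, 2, 4} : Finset ℕ), ∀ j ∈ ({0, 2, 4} : Finset ℕ), i ≠ j → Disjoint (C i) (C j)) ∧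
    (∀ d : ZMod p, d ≠ 0 → outerCount ![C 0, C 2, C 4] d = 2 * n ^ 2) :=
  stmt_10_general n p hp hprime α hα
end

section
/- A DSS of index ρ ≥ 1 over Z_v with q sets guarantees block synchronization under up to ⌊(ρ−1)/2⌋ substitution errors: if every nonzero cyclic shift difference is covered at least ρ times, then any codeword of the associated coset code and any splice of two codewords have Hamming distance at least ρ on the marker positions; hence a received word within Hamming distance ⌊(ρ−1)/2⌋ of a codeword cannot simultaneously be within distance ⌊(ρ−1)/2⌋ of a splice. -/
/-- The splice with offset `s` (1 ≤ s ≤ v−1) between a preceding codeword `x` and a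
following codeword `y`: the last `s` symbols of `x` followed by the first `v−s`
symbols of `y`. -/
def splice {v q : ℕ} [NeZero v] (x y : ZMod v → Fin q) (s : ℕ) : ZMod v → Fin q :=
  fun k => if k.val < s then x (k - (s : ZMod v)) else y (k - (s : ZMod v))

/-- A word of the coset code determined by the marker sets `Q`: positions in `Q i`
carry the synchronization marker `i`; all other positions are arbitrary. -/
def isCodeword {v q : ℕ} (Q : Fin q → Finset (ZMod v)) (z : ZMod v → Fin q) : Prop :=
  ∀ i : Fin q, ∀ k ∈ Q i, z k = i

/-!
A splice with offset `s` is, position by position, a codeword shifted by `s`. So each outer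
difference `a - b = s` with `a ∈ Q i`, `b ∈ Q j`, `i ≠ j` yields a position `a` where the codeword
reads `i` and the splice reads `j`; since `a` determines `i`, `j` and `b = a - s`, distinct outer
differences give distinct positions, and the index `ρ` bounds the Hamming distance from below.
Two balls of radius `⌊(ρ - 1)/2⌋` around words at distance `≥ ρ` are then disjoint by the
triangle inequality.
-/

open Finset

section OuterDifferences

variable {G ι : Type*} [AddCommGroup G] [DecidableEq G] [Fintype ι] [DecidableEq ι]

theorem outerCount_eq_card_sigma (Q : ι → Finset G) (d : G) :
    outerCount Q d = ((univ.filter fun p : ι × ι => p.1 ≠ p.2).sigma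
      fun p => (Q p.1 ×ˢ Q p.2).filter fun x => x.1 - x.2 = d).card := by
  rw [card_sigma, sum_filter, outerCount, ← Fintype.sum_prod_type']
  simp only [ne_eq, ite_not]

theorem outerCount_le_hammingDist [Fintype G] (Q : ι → Finset G) {d : G} {z w : G → ι}
    (hz : ∀ i, ∀ a ∈ Q i, z a = i) (hw : ∀ j, ∀ b ∈ Q j, w (b + d) = j) :
    outerCount Q d ≤ hammingDist z w := by
  rw [outerCount_eq_card_sigma, hammingDist]
  refine card_le_card_of_injOn (fun x => x.2.1) ?_ ?_
  · rintro ⟨⟨i, j⟩, ⟨a, b⟩⟩ hx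
    simp only [mem_coe, mem_sigma, mem_filter, mem_univ, true_and, mem_product] at hx ⊢
    obtain ⟨hij, ⟨ha, hb⟩, rfl⟩ := hx
    have hwa : w a = j := by simpa using hw j b hb
    rwa [hz i a ha, hwa]
  · rintro ⟨⟨i, j⟩, ⟨a, b⟩⟩ hx ⟨⟨i', j'⟩, ⟨a', b'⟩⟩ hx' (rfl : a = a')
    simp only [mem_coe, mem_sigma, mem_filter, mem_univ, true_and, mem_product] at hx hx'
    obtain ⟨-, ⟨ha, hb⟩, hab⟩ := hx
    obtain ⟨-, ⟨ha', hb'⟩, hab'⟩ := hx'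
    obtain rfl : b = b' := by rw [← sub_right_inj (a := a), hab, hab']
    obtain rfl := (hz i a ha).symm.trans (hz i' a ha')
    obtain rfl := (hw j b hb).symm.trans (hw j' b hb')
    rfl

end OuterDifferences

theorem splice_add_natCast_of_mem {v q : ℕ} [NeZero v] {Q : Fin q → Finset (ZMod v)}
    {x y : ZMod v → Fin q} (hx : isCodeword Q x) (hy : isCodeword Q y) (s : ℕ) {j : Fin q}
    {k : ZMod v} (hk : k ∈ Q j) : splice x y s (k + s) = j := by
  unfold splice
  split_ifs <;> simp only [add_sub_cancel_right, hx j k hk, hy j k hk]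

theorem stmt_14_general (v q ρ : ℕ) [NeZero v] (hρ : 1 ≤ ρ)
    (Q : Fin q → Finset (ZMod v))
    (hidx : ∀ d : ZMod v, d ≠ 0 → ρ ≤ outerCount Q d) :
    ∀ z x y : ZMod v → Fin q, isCodeword Q z → isCodeword Q x → isCodeword Q y →
      ∀ s : ℕ, 1 ≤ s → s ≤ v - 1 →
        ρ ≤ hammingDist z (splice x y s) ∧
        ∀ r : ZMod v → Fin q,
          hammingDist r z ≤ (ρ - 1) / 2 → ¬ hammingDist r (splice x y s) ≤ (ρ - 1) / 2 := by
  intro z x y hz hx hy s hs hsv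
  have hs_ne : (s : ZMod v) ≠ 0 := (ZMod.natCast_eq_zero_iff s v).not.mpr
    (Nat.not_dvd_of_pos_of_lt hs (by have := NeZero.pos v; omega))
  have hdist : ρ ≤ hammingDist z (splice x y s) :=
    (hidx _ hs_ne).trans <|
      outerCount_le_hammingDist Q hz fun _ _ ↦ splice_add_natCast_of_mem hx hy s
  refine ⟨hdist, fun r hrz hrw ↦ ?_⟩
  have htri := hammingDist_triangle_left z (splice x y s) r
  omega

theorem stmt_14 (v q ρ : ℕ) [NeZero v] (hρ : 1 ≤ ρ)
    (Q : Fin q → Finset (ZMod v))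
    (hdisj : ∀ i j, i ≠ j → Disjoint (Q i) (Q j))
    (hidx : ∀ d : ZMod v, d ≠ 0 → ρ ≤ outerCount Q d) :
    ∀ z x y : ZMod v → Fin q, isCodeword Q z → isCodeword Q x → isCodeword Q y →
      ∀ s : ℕ, 1 ≤ s → s ≤ v - 1 →
        ρ ≤ hammingDist z (splice x y s) ∧
        ∀ r : ZMod v → Fin q,
          hammingDist r z ≤ (ρ - 1) / 2 → ¬ hammingDist r (splice x y s) ≤ (ρ - 1) / 2 :=
  stmt_14_general v q ρ hρ Q hidx
end

section
/- For the regular DSSs of Corollary on Paley products, the redundancy ratio tends to the Levenshtein bound: with v = 2mq+1, v' = 2m'q'+1 primes ≡ 3 (mod 4), index ρ'' = (m(m'−1)(q−1)+(m−1)m'(q'−1)+mm'(q−1)(q'−1))/4 and redundancy mm'qq', the ratio mm'qq' / sqrt(qq'ρ''(vv'−1)/(qq'−1)) tends to 1 as m, m' → ∞ (with q, q' fixed). -/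
/-!
Write the index as `4ρ'' = mm'(qq' - 1) - m(q - 1) - m'(q' - 1)` and note
`vv' - 1 = 4mm'qq' + 2mq + 2m'q'`. Then the squared Levenshtein bound is `(mm'qq')²` times
`(1 - ((q' - 1)/m + (q - 1)/m')/(qq' - 1)) · (1 + (1/(mq) + 1/(m'q'))/2)`,
a product of two factors that tend to `1` as `m, m' → ∞`.
-/

open Filter Topology

theorem tendsto_inv_natCast_prod :
    Tendsto (fun mm : ℕ × ℕ => ((mm.1 : ℝ)⁻¹, (mm.2 : ℝ)⁻¹)) atTop (𝓝 (0, 0)) := by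
  rw [← prod_atTop_atTop_eq]
  exact (tendsto_inv_atTop_nhds_zero_nat.comp tendsto_fst).prodMk_nhds
    (tendsto_inv_atTop_nhds_zero_nat.comp tendsto_snd)

theorem redundancy_div_sqrt_levenshteinBound {q q' m m' : ℝ} (hq : 0 < q) (hq' : 0 < q')
    (hqq' : q * q' ≠ 1) (hm : 0 < m) (hm' : 0 < m') :
    m * m' * q * q' /
        √(q * q' * ((m * (m' - 1) * (q - 1) + (m - 1) * m' * (q' - 1)
          + m * m' * (q - 1) * (q' - 1)) / 4) * ((2 * m * q + 1) * (2 * m' * q' + 1) - 1)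
          / (q * q' - 1)) =
      (√((1 - ((q' - 1) * m⁻¹ + (q - 1) * m'⁻¹) / (q * q' - 1))
        * (1 + (m⁻¹ / q + m'⁻¹ / q') / 2)))⁻¹ := by
  have hqq'1 : q * q' - 1 ≠ 0 := sub_ne_zero.mpr hqq'
  have factor : q * q' * ((m * (m' - 1) * (q - 1) + (m - 1) * m' * (q' - 1)
          + m * m' * (q - 1) * (q' - 1)) / 4) * ((2 * m * q + 1) * (2 * m' * q' + 1) - 1)
          / (q * q' - 1) =
      (m * m' * q * q') ^ 2 * ((1 - ((q' - 1) * m⁻¹ + (q - 1) * m'⁻¹) / (q * q' - 1))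
        * (1 + (m⁻¹ / q + m'⁻¹ / q') / 2)) := by
    field_simp
    ring
  rw [factor, Real.sqrt_mul (sq_nonneg _), Real.sqrt_sq (by positivity)]
  field_simp

theorem stmt_18 (q q' : ℕ) (hq : 2 ≤ q) (hq' : 2 ≤ q') :
    -- with v = 2mq+1 and v' = 2m'q'+1, the ratio of the redundancy mm'qq' of the
    -- product DSS of index ρ'' = (m(m'−1)(q−1)+(m−1)m'(q'−1)+mm'(q−1)(q'−1))/4
    -- to the Levenshtein bound sqrt(qq'·ρ''·(vv'−1)/(qq'−1)) tends to 1
    -- as m, m' → ∞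
    Tendsto
      (fun mm : ℕ × ℕ =>
        let m : ℝ := mm.1
        let m' : ℝ := mm.2
        let ρ : ℝ := (m * (m' - 1) * (q - 1) + (m - 1) * m' * (q' - 1)
          + m * m' * (q - 1) * (q' - 1)) / 4
        (m * m' * q * q') /
          Real.sqrt ((q * q' * ρ * ((2 * m * q + 1) * (2 * m' * q' + 1) - 1))
            / (q * q' - 1)))
      atTop (nhds 1) := by
  have hq0 : (0 : ℝ) < q := by positivity
  have hq'0 : (0 : ℝ) < q' := by positivity
  have hqq' : (q : ℝ) * q' ≠ 1 := by
    have : (4 : ℝ) ≤ q * q' := by exact_mod_cast Nat.mul_le_mul hq hq'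
    linarith
  set F : ℝ × ℝ → ℝ := fun x =>
    (1 - ((q' - 1) * x.1 + (q - 1) * x.2) / (q * q' - 1)) * (1 + (x.1 / q + x.2 / q') / 2)
  have hF0 : F (0, 0) = 1 := by simp [F]
  have hcont : ContinuousAt F (0, 0) := by fun_prop
  have hF := hcont.tendsto.comp tendsto_inv_natCast_prod
  rw [hF0] at hF
  have hlim := hF.sqrt.inv₀ (by simp)
  rw [Real.sqrt_one, inv_one] at hlim
  refine hlim.congr' ?_
  filter_upwards [eventually_ge_atTop (1, 1)] with mm ⟨hm, hm'⟩
  exact (redundancy_div_sqrt_levenshteinBound hq0 hq'0 hqq'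
    (Nat.cast_pos.mpr hm) (Nat.cast_pos.mpr hm')).symm
end

section
/- In the embedding construction of Theorem (FHS × DSS), outer differences divisible by v' occur at least ρv'e' times: for the sets S_{i,x} = {v'a + x : a ∈ Q_i} over Z_{vv'}, where {Q_i} partitions Z_v with every nonzero outer difference occurring at least ρ times, and x ranges over the v'e' points used by the DSS over Z_{v'}, every nonzero element of Z_{vv'} that is a multiple of v' occurs at least ρv'e' times as an outer difference among the S_{i,x}. -/
open Finset

section OuterCount

variable {G H ι : Type*} [AddCommGroup G] [AddCommGroup H] [DecidableEq G] [DecidableEq H]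
  [Fintype ι] [DecidableEq ι]

theorem outerCount_le_outerCount_image (Q : ι → Finset G) {f : G → H}
    (hf : Function.Injective f) {c : G} {d : H} (hfd : ∀ a b, a - b = c → f a - f b = d) :
    outerCount Q c ≤ outerCount (fun i => (Q i).image f) d := by
  refine sum_le_sum fun i _ => sum_le_sum fun j _ => ?_
  split_ifs
  · exact le_rfl
  · rw [← card_image_of_injective _ (hf.prodMap hf)]
    refine card_le_card fun p hp => ?_
    obtain ⟨⟨a, b⟩, hab, rfl⟩ := mem_image.mp hp
    simp only [mem_filter, mem_product] at hab ⊢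
    exact ⟨⟨mem_image_of_mem f hab.1.1, mem_image_of_mem f hab.1.2⟩, hfd a b hab.2⟩

theorem sum_outerCount_fiber_le {X : Type*} [Fintype X] [DecidableEq X]
    (S : ι × X → Finset G) (d : G) :
    ∑ x, outerCount (fun i => S (i, x)) d ≤ outerCount S d := by
  rw [outerCount, Fintype.sum_prod_type, sum_comm]
  refine sum_le_sum fun x _ => sum_le_sum fun i _ => ?_
  rw [Fintype.sum_prod_type]
  refine sum_le_sum fun j _ => le_trans ?_ (single_le_sum (fun _ _ => Nat.zero_le _) (mem_univ x))
  by_cases hij : i = j <;> simp [hij]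

end OuterCount

namespace ZMod

variable {v v' : ℕ}

theorem natCast_mul_eq_natCast_mul {m n : ℕ} (h : (m : ZMod v) = n) :
    ((v' * m : ℕ) : ZMod (v * v')) = ((v' * n : ℕ) : ZMod (v * v')) := by
  rw [natCast_eq_natCast_iff] at h ⊢
  rw [mul_comm v]
  exact h.mul_left' v'

theorem natCast_mul_val_add_injective [NeZero v] {x : ℕ} (hx : x < v') :
    Function.Injective fun a : ZMod v => ((v' * a.val + x : ℕ) : ZMod (v * v')) := by
  have hlt : ∀ a : ZMod v, v' * a.val + x < v * v' := fun a => by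
    nlinarith [a.val_lt]
  intro a b hab
  simp only [natCast_eq_natCast_iff', Nat.mod_eq_of_lt (hlt a), Nat.mod_eq_of_lt (hlt b)] at hab
  exact val_injective v (Nat.eq_of_mul_eq_mul_left (by omega) (by omega : v' * a.val = v' * b.val))

theorem natCast_mul_val_add_sub [NeZero v] (x : ℕ) {a b : ZMod v} {c : ℕ}
    (hab : a - b = c) :
    ((v' * a.val + x : ℕ) : ZMod (v * v')) - ((v' * b.val + x : ℕ) : ZMod (v * v')) =
      ((v' * c : ℕ) : ZMod (v * v')) := by
  have hshift : ((a.val : ℕ) : ZMod v) = ((b.val + c : ℕ) : ZMod v) := by simp [← hab]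
  have := natCast_mul_eq_natCast_mul (v' := v') hshift
  push_cast at this ⊢
  rw [this]
  ring

end ZMod

theorem stmt_19_general (v v' q ρ : ℕ) [NeZero v] (hv' : 0 < v')
    (Q : Fin q → Finset (ZMod v))
    -- {Q_i} partitions Z_v and every nonzero outer difference occurs at least ρ times
    (hQidx : ∀ d : ZMod v, d ≠ 0 → ρ ≤ outerCount Q d)
    -- P is the set of v'e' points used by the DSS over Z_{v'}
    (P : Finset (ZMod v')) :
    let S : Fin q × {x : ZMod v' // x ∈ P} → Finset (ZMod (v * v')) := fun ix =>
      (Q ix.1).image (fun a => ((v' * a.val + ix.2.val.val : ℕ) : ZMod (v * v')))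
    -- every nonzero multiple of v' in Z_{vv'} occurs at least ρ·v'e' = ρ·|P| times
    -- as an outer difference among the S_{i,x}
    ∀ d : ZMod (v * v'), d ≠ 0 → (∃ c : ℕ, d = ((v' * c : ℕ) : ZMod (v * v'))) →
      ρ * P.card ≤ outerCount S d := by
  intro S d hd ⟨c, hc⟩
  have : NeZero v' := ⟨hv'.ne'⟩
  have hc0 : (c : ZMod v) ≠ 0 := fun h => hd <| by
    simpa [hc] using ZMod.natCast_mul_eq_natCast_mul (v' := v') (h.trans Nat.cast_zero.symm)
  calc ρ * P.card = ∑ _x : {x : ZMod v' // x ∈ P}, ρ := by simp [mul_comm]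
    _ ≤ ∑ x : {x : ZMod v' // x ∈ P}, outerCount (fun i => S (i, x)) d :=
      sum_le_sum fun x _ => (hQidx _ hc0).trans <|
        outerCount_le_outerCount_image Q (ZMod.natCast_mul_val_add_injective x.val.val_lt)
          fun _ _ hab => hc ▸ ZMod.natCast_mul_val_add_sub _ hab
    _ ≤ outerCount S d := sum_outerCount_fiber_le S d

theorem stmt_19 (v v' q ρ : ℕ) [NeZero v] (hv' : 0 < v')
    (Q : Fin q → Finset (ZMod v))
    -- {Q_i} partitions Z_v and every nonzero outer difference occurs at least ρ times
    (hQdisj : ∀ i j, i ≠ j → Disjoint (Q i) (Q j))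
    (hQcover : ∀ x : ZMod v, ∃ i, x ∈ Q i)
    (hQidx : ∀ d : ZMod v, d ≠ 0 → ρ ≤ outerCount Q d)
    -- P is the set of v'e' points used by the DSS over Z_{v'}
    (P : Finset (ZMod v')) :
    let S : Fin q × {x : ZMod v' // x ∈ P} → Finset (ZMod (v * v')) := fun ix =>
      (Q ix.1).image (fun a => ((v' * a.val + ix.2.val.val : ℕ) : ZMod (v * v')))
    -- every nonzero multiple of v' in Z_{vv'} occurs at least ρ·v'e' = ρ·|P| times
    -- as an outer difference among the S_{i,x}
    ∀ d : ZMod (v * v'), d ≠ 0 → (∃ c : ℕ, d = ((v' * c : ℕ) : ZMod (v * v'))) →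
      ρ * P.card ≤ outerCount S d :=
  stmt_19_general v v' q ρ hv' Q hQidx P
end
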